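/- Let k ≥ 2 and p ≥ 1 with p dividing k−1. Then λ_{p,k} = (1 − 1/p)·(1 − 1/k), where λ_{p,k} is the supremum over measurable g : [0,1]^{k−1} → {0,…,p−1} of the Lebesgue measure of {x ∈ [0,1]^k : g(x₁,…,x_{k−1}) > g(x₂,…,x_k)}. -/

import Mathlib

open MeasureTheory unitInterval ENNReal Set

attribute [local instance 2000] Subtype.fintype

section TiesNull

lemma vol_I_singleton (c : I) : (volume : Measure I) {c} = 0 := by
  have h : ({c} : Set I) = Subtype.val ⁻¹' {(c : ℝ)} := by ext y; simp [Subtype.ext_iff]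
  rw [h, volume_preimage_coe nullMeasurableSet_Icc (measurableSet_singleton _)]
  exact measure_mono_null inter_subset_left Real.volume_singleton

lemma vol_ties (k : ℕ) (i j : Fin k) (hij : i ≠ j) :
    volume {x : Fin k → I | x i = x j} = 0 := by
  classical
  set Φ := MeasurableEquiv.piEquivPiSubtypeProd (fun _ : Fin k => I) (fun t => t = i) with hΦ
  have hmp : MeasurePreserving Φ := volume_preserving_piEquivPiSubtypeProd _ _
  have hji : ¬ (j = i) := fun h => hij (by simp [h])
  set S : Set (({t : Fin k // t = i} → I) × ({t : Fin k // ¬ t = i} → I)) :=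
    {q | (q.1 ⟨i, rfl⟩ : ℝ) = (q.2 ⟨j, hji⟩ : ℝ)} with hS
  have hSm : MeasurableSet S := by
    apply measurableSet_eq_fun
    · exact measurable_subtype_coe.comp ((measurable_pi_apply _).comp measurable_fst)
    · exact measurable_subtype_coe.comp ((measurable_pi_apply _).comp measurable_snd)
  have hpre : {x : Fin k → I | x i = x j} = Φ ⁻¹' S := by
    ext x
    simp [hS, hΦ, MeasurableEquiv.piEquivPiSubtypeProd, Subtype.ext_iff, eq_comm]
  rw [hpre, hmp.measure_preimage hSm.nullMeasurableSet]
  have hprod : (volume : Measure (({t : Fin k // t = i} → I) × ({t : Fin k // ¬ t = i} → I))) S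
      = ∫⁻ a, volume (Prod.mk a ⁻¹' S) ∂volume := Measure.prod_apply hSm
  rw [hprod]
  have hzero : ∀ a : {t : Fin k // t = i} → I, volume (Prod.mk a ⁻¹' S) = 0 := by
    intro a
    have hset : (Prod.mk a ⁻¹' S) =
        Set.pi univ (fun t : {t : Fin k // ¬ t = i} =>
          if t = ⟨j, hji⟩ then {a ⟨i, rfl⟩} else univ) := by
      ext b
      simp only [hS, mem_preimage, mem_setOf_eq, mem_pi, mem_univ, forall_true_left]
      constructor
      · intro h t
        by_cases ht : t = ⟨j, hji⟩ <;> simp [ht, Subtype.ext_iff, h.symm]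
      · intro h
        have := h ⟨j, hji⟩
        simp [Subtype.ext_iff] at this
        rw [this]
    rw [hset, volume_pi_pi]
    apply Finset.prod_eq_zero (Finset.mem_univ (⟨j, hji⟩ : {t : Fin k // ¬ t = i}))
    simp [vol_I_singleton]
  simp [hzero]

end TiesNull

section MaxIdx

/-- the set of argmax indices -/
noncomputable def amSet {n : ℕ} (x : Fin n → I) : Finset (Fin n) :=
  Finset.univ.filter (fun j => ∀ i, x i ≤ x j)

lemma amSet_nonempty {n : ℕ} [NeZero n] (x : Fin n → I) : (amSet x).Nonempty := by
  obtain ⟨j, hj⟩ := Finite.exists_max x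
  exact ⟨j, by simp [amSet, hj]⟩

/-- least index attaining the maximum -/
noncomputable def maxIdx {n : ℕ} [NeZero n] (x : Fin n → I) : Fin n :=
  (amSet x).min' (amSet_nonempty x)

lemma maxIdx_eq_iff {n : ℕ} [NeZero n] (x : Fin n → I) (j : Fin n) :
    maxIdx x = j ↔ ((∀ i, x i ≤ x j) ∧ ∀ j' < j, ¬ ∀ i, x i ≤ x j') := by
  constructor
  · rintro rfl
    refine ⟨?_, ?_⟩
    · have := Finset.min'_mem (amSet x) (amSet_nonempty x)
      simpa [amSet, maxIdx] using this
    · intro j' hj' hall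
      have : maxIdx x ≤ j' := Finset.min'_le _ _ (by simp [amSet, hall])
      exact absurd hj' (not_lt.2 this)
  · rintro ⟨h1, h2⟩
    have hmem : j ∈ amSet x := by simp [amSet, h1]
    have h3 : maxIdx x ≤ j := Finset.min'_le _ _ hmem
    rcases lt_or_eq_of_le h3 with h | h
    · exfalso
      have := Finset.min'_mem (amSet x) (amSet_nonempty x)
      simp only [amSet, Finset.mem_filter] at this
      exact h2 _ h this.2
    · exact h

lemma measurable_maxIdx {n : ℕ} [NeZero n] : Measurable (maxIdx (n := n)) := by
  apply measurable_to_countable'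
  intro j
  have h1 : (maxIdx ⁻¹' {j} : Set (Fin n → I)) =
      {x : Fin n → I | (∀ i, x i ≤ x j) ∧ ∀ j' < j, ¬ ∀ i, x i ≤ x j'} := by
    ext x; simp [maxIdx_eq_iff]
  rw [h1]
  have h2 : {x : Fin n → I | (∀ i, x i ≤ x j) ∧ ∀ j' < j, ¬ ∀ i, x i ≤ x j'} =
      (⋂ i, {x : Fin n → I | x i ≤ x j}) ∩
        ⋂ j', ⋂ (_ : j' < j), (⋂ i, {x : Fin n → I | x i ≤ x j'})ᶜ := by
    ext x; simp
  rw [h2]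
  apply MeasurableSet.inter
  · exact MeasurableSet.iInter fun i =>
      measurableSet_le (measurable_pi_apply i) (measurable_pi_apply j)
  · refine MeasurableSet.iInter fun j' => MeasurableSet.iInter fun _ => ?_
    exact (MeasurableSet.iInter fun i =>
      measurableSet_le (measurable_pi_apply i) (measurable_pi_apply j')).compl

/-- a strict maximum is THE maxIdx -/
lemma maxIdx_eq_of_strict {n : ℕ} [NeZero n] (x : Fin n → I) (j : Fin n)
    (h : ∀ i, i ≠ j → x i < x j) : maxIdx x = j := by
  rw [maxIdx_eq_iff]
  refine ⟨fun i => ?_, fun j' hj' hall => ?_⟩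
  · by_cases hi : i = j
    · simp [hi]
    · exact (h i hi).le
  · have h1 : x j' < x j := h j' (by exact fun e => absurd hj' (by simp [e]))
    exact absurd (hall j) (not_le.2 h1)

end MaxIdx

section Cyclic

lemma cyclic_count {k p m : ℕ} [NeZero k] (hp : 1 ≤ p) (hkm : k = p * m + 1)
    (a : Fin k → Fin p) :
    (Finset.univ.filter (fun i : Fin k => a (i + 1) < a i)).card ≤ (p - 1) * m := by
  classical
  set D := Finset.univ.filter (fun i : Fin k => a (i + 1) < a i) with hD
  set d := D.card with hd
  have hsum : ∑ i : Fin k, ((a (i + 1) : ℤ) - (a i : ℤ)) = 0 := by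
    rw [Finset.sum_sub_distrib]
    rw [Fintype.sum_equiv (Equiv.addRight (1 : Fin k)) (fun i => (a (i + 1) : ℤ))
      (fun i => (a i : ℤ)) (fun i => rfl)]
    exact sub_self _
  have hsplit := Finset.sum_filter_add_sum_filter_not Finset.univ
    (fun i : Fin k => a (i + 1) < a i) (fun i => ((a (i + 1) : ℤ) - (a i : ℤ)))
  rw [← hD] at hsplit
  have hdk : d ≤ k := by
    rw [hd, hD]
    calc (Finset.univ.filter (fun i : Fin k => a (i + 1) < a i)).card
        ≤ (Finset.univ : Finset (Fin k)).card := Finset.card_filter_le _ _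
      _ = k := by simp
  have h1 : ∑ i ∈ D, ((a (i + 1) : ℤ) - (a i : ℤ)) ≤ (d : ℤ) * (-1) := by
    have := Finset.sum_le_card_nsmul D (fun i => ((a (i + 1) : ℤ) - (a i : ℤ))) (-1)
      (fun i hi => by
        simp only [hD, Finset.mem_filter] at hi
        have : (a (i + 1) : ℤ) < (a i : ℤ) := by exact_mod_cast hi.2
        show (a (i + 1) : ℤ) - (a i : ℤ) ≤ -1
        omega)
    simpa [nsmul_eq_mul] using this
  have h2 : ∑ i ∈ Finset.univ.filter (fun i : Fin k => ¬ a (i + 1) < a i),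
      ((a (i + 1) : ℤ) - (a i : ℤ)) ≤ ((k : ℤ) - d) * ((p : ℤ) - 1) := by
    have hcard : (Finset.univ.filter (fun i : Fin k => ¬ a (i + 1) < a i)).card = k - d := by
      have h := Finset.card_filter_add_card_filter_not (s := (Finset.univ : Finset (Fin k)))
        (p := fun i : Fin k => a (i + 1) < a i)
      rw [← hD, ← hd] at h
      simp only [Finset.card_univ, Fintype.card_fin] at h
      omega
    have := Finset.sum_le_card_nsmul (Finset.univ.filter (fun i : Fin k => ¬ a (i + 1) < a i))
      (fun i => ((a (i + 1) : ℤ) - (a i : ℤ))) ((p : ℤ) - 1)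
      (fun i _ => by
        have h3 : (a (i + 1) : ℤ) ≤ (p : ℤ) - 1 := by
          have := (a (i + 1)).isLt; omega
        have h4 : (0 : ℤ) ≤ (a i : ℤ) := Int.natCast_nonneg _
        show (a (i + 1) : ℤ) - (a i : ℤ) ≤ (p : ℤ) - 1
        omega)
    rw [hcard] at this
    have hcd : ((k - d : ℕ) : ℤ) = (k : ℤ) - d := by omega
    simp only [nsmul_eq_mul] at this
    rw [hcd] at this
    exact this
  have hkey : (p : ℤ) * d ≤ ((p : ℤ) - 1) * k := by
    nlinarith [hsum, hsplit, h1, h2]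
  by_contra hcon
  push_neg at hcon
  have h5 : ((p : ℤ) - 1) * m + 1 ≤ d := by
    have hc1 : ((p - 1) * m : ℕ) < d := hcon
    have hc2 : (((p - 1) * m : ℕ) : ℤ) = ((p : ℤ) - 1) * m := by
      push_cast [Nat.cast_sub hp]; ring
    omega
  have hk' : (k : ℤ) = p * m + 1 := by exact_mod_cast hkm
  nlinarith [hkey, h5, hk', (by exact_mod_cast hp : (1 : ℤ) ≤ p)]

lemma perm_mp {k : ℕ} (pe : Equiv.Perm (Fin k)) :
    MeasurePreserving (fun (x : Fin k → I) => fun t => x (pe t)) volume volume := by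
  have h := volume_measurePreserving_piCongrLeft (fun _ : Fin k => I) pe.symm
  have he : ⇑(MeasurableEquiv.piCongrLeft (fun _ : Fin k => I) pe.symm)
      = fun (x : Fin k → I) => fun t => x (pe t) := by
    funext x t
    rw [MeasurableEquiv.coe_piCongrLeft]
    conv_lhs => rw [show t = pe.symm (pe t) by simp]
    exact Equiv.piCongrLeft_apply_apply (fun _ : Fin k => I) pe.symm x (pe t)
  rwa [he] at h

lemma rot_mp {k : ℕ} [NeZero k] (c : Fin k) :
    MeasurePreserving (fun (x : Fin k → I) => fun t => x (t + c)) volume volume :=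
  perm_mp (Equiv.addRight c)

end Cyclic

section Win
variable {k : ℕ} [NeZero k]

/-- cyclic window starting at `i` -/
def win (hk : 2 ≤ k) (i : Fin k) (x : Fin k → I) : Fin (k - 1) → I :=
  fun t => x (i + ⟨t.1, by omega⟩)

omit [NeZero k] in
lemma measurable_win (hk : 2 ≤ k) (i : Fin k) : Measurable (win hk i) :=
  measurable_pi_lambda _ (fun _ => measurable_pi_apply _)

omit [NeZero k] in
lemma win_rot (hk : 2 ≤ k) (i c : Fin k) (x : Fin k → I) :
    win hk i (fun t => x (t + c)) = win hk (i + c) x := by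
  funext t
  simp only [win]
  congr 1
  exact add_right_comm i _ c

lemma win_zero (hk : 2 ≤ k) (x : Fin k → I) :
    win hk 0 x = fun t => x (Fin.castLE (by omega) t) := by
  funext t
  simp only [win, zero_add]
  congr 1

lemma win_one (hk : 2 ≤ k) (x : Fin k → I) :
    win hk 1 x = fun t : Fin (k - 1) => x ⟨t.1 + 1, by omega⟩ := by
  funext t
  simp only [win]
  congr 1
  apply Fin.ext
  rw [Fin.add_def]
  show ((1 : Fin k).val + t.1) % k = t.1 + 1
  have h1 : (1 : Fin k).val = 1 := by
    show 1 % k = 1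
    exact Nat.mod_eq_of_lt (by omega)
  have ht : t.1 < k - 1 := t.isLt
  rw [h1, Nat.mod_eq_of_lt (by omega)]
  omega

end Win

section Upper

lemma upper_bound {k p m : ℕ} (hk : 2 ≤ k) (hp : 1 ≤ p) (hm : k = p * m + 1)
    (g : (Fin (k - 1) → I) → Fin p) (hg : Measurable g) :
    volume {x : Fin k → I |
        g (fun i => x (Fin.castLE (by omega) i)) > g (fun i => x ⟨i.1 + 1, by omega⟩)} ≤
      (((p - 1) * m : ℕ) : ℝ≥0∞) / k := by
  haveI : NeZero k := ⟨by omega⟩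
  classical
  set A : Fin k → Set (Fin k → I) :=
    fun i => {x | g (win hk (i + 1) x) < g (win hk i x)} with hA
  have hAmeas : ∀ i, MeasurableSet (A i) := by
    intro i
    have : A i = (fun x => (g (win hk (i + 1) x), g (win hk i x))) ⁻¹'
        {q : Fin p × Fin p | q.1 < q.2} := rfl
    rw [this]
    exact ((hg.comp (measurable_win hk _)).prodMk (hg.comp (measurable_win hk _)))
      ((Set.toFinite _).measurableSet)
  have hArot : ∀ i, A i = (fun x => fun t => x (t + i)) ⁻¹' (A 0) := by
    intro i
    ext x
    simp only [hA, mem_preimage, mem_setOf_eq, win_rot, zero_add]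
    rw [add_comm 1 i]
  have hAeq : ∀ i, volume (A i) = volume (A 0) := by
    intro i
    rw [hArot i]
    exact (rot_mp i).measure_preimage (hAmeas 0).nullMeasurableSet
  have hset : {x : Fin k → I |
      g (fun i => x (Fin.castLE (by omega) i)) > g (fun i => x ⟨i.1 + 1, by omega⟩)} = A 0 := by
    ext x
    simp only [hA, mem_setOf_eq, zero_add, win_zero, win_one]
  rw [hset]
  have hcount : ∀ x : Fin k → I,
      ((Finset.univ.filter (fun i : Fin k => x ∈ A i)).card : ℝ≥0∞) ≤ ((p - 1) * m : ℕ) := by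
    intro x
    have := cyclic_count (k := k) hp hm (fun i => g (win hk i x))
    exact_mod_cast this
  have hsum : (k : ℝ≥0∞) * volume (A 0) ≤ ((p - 1) * m : ℕ) := by
    have e1 : ∑ i : Fin k, volume (A i) = (k : ℝ≥0∞) * volume (A 0) := by
      simp [hAeq, Finset.card_univ]
    rw [← e1]
    have e2 : ∀ i, volume (A i) = ∫⁻ x, (A i).indicator 1 x := by
      intro i; rw [lintegral_indicator_one (hAmeas i)]
    simp_rw [e2]
    rw [← lintegral_finset_sum]
    · have e3 : ∀ x : Fin k → I, ∑ i : Fin k, (A i).indicator (1 : (Fin k → I) → ℝ≥0∞) x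
          = ((Finset.univ.filter (fun i : Fin k => x ∈ A i)).card : ℝ≥0∞) := by
        intro x
        simp only [Set.indicator_apply, Pi.one_apply]
        rw [Finset.sum_boole]
      calc ∫⁻ x, ∑ i : Fin k, (A i).indicator 1 x
          ≤ ∫⁻ _x, (((p - 1) * m : ℕ) : ℝ≥0∞) := by
            apply lintegral_mono
            intro x
            show ∑ i : Fin k, (A i).indicator 1 x ≤ (((p - 1) * m : ℕ) : ℝ≥0∞)
            rw [e3 x]
            exact hcount x
        _ = ((p - 1) * m : ℕ) := by
            rw [lintegral_const]
            simp [measure_univ]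
    · intro i _
      exact measurable_one.indicator (hAmeas i)
  rw [ENNReal.le_div_iff_mul_le (Or.inl (by simp; omega)) (Or.inl (by simp))]
  rwa [mul_comm]

end Upper

section SS
variable {k : ℕ}

def SS (k : ℕ) (j : Fin k) : Set (Fin k → I) := {x | ∀ i, i ≠ j → x i < x j}

lemma SS_meas (j : Fin k) : MeasurableSet (SS k j) := by
  have h : SS k j = ⋂ i, ⋂ (_ : i ≠ j), {x : Fin k → I | x i < x j} := by
    ext x; simp [SS]
  rw [h]
  exact MeasurableSet.iInter fun i => MeasurableSet.iInter fun _ =>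
    measurableSet_lt (measurable_pi_apply i) (measurable_pi_apply j)

lemma SS_disj : Pairwise (Function.onFun Disjoint (SS k)) := by
  intro a b hab
  rw [Function.onFun, Set.disjoint_left]
  intro x hxa hxb
  exact absurd (hxb a hab) (not_lt.2 (hxa b (Ne.symm hab)).le)

def NonInjSet (k : ℕ) : Set (Fin k → I) := {x | ∃ i j : Fin k, i ≠ j ∧ x i = x j}

lemma noninj_null : volume (NonInjSet k) = 0 := by
  apply measure_mono_null
    (show NonInjSet k ⊆ ⋃ i, ⋃ j, ⋃ (_ : i ≠ j), {x : Fin k → I | x i = x j} by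
      rintro x ⟨i, j, hij, he⟩
      exact mem_iUnion.2 ⟨i, mem_iUnion.2 ⟨j, mem_iUnion.2 ⟨hij, he⟩⟩⟩)
  exact measure_iUnion_null fun i => measure_iUnion_null fun j =>
    measure_iUnion_null fun hij => vol_ties k i j hij

lemma SS_preimage (pe : Equiv.Perm (Fin k)) (j : Fin k) :
    (fun (x : Fin k → I) => fun t => x (pe t)) ⁻¹' (SS k j) = SS k (pe j) := by
  ext x
  simp only [SS, mem_preimage, mem_setOf_eq]
  constructor
  · intro h i hi
    have := h (pe.symm i) (fun e => hi (by rw [← e, Equiv.apply_symm_apply]))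
    simpa using this
  · intro h i hi
    exact h (pe i) (fun e => hi (pe.injective e))

lemma SS_vol [NeZero k] (j : Fin k) : volume (SS k j) = 1 / (k : ℝ≥0∞) := by
  classical
  have heq : ∀ a b : Fin k, volume (SS k a) = volume (SS k b) := by
    intro a b
    have h := (perm_mp (Equiv.swap a b)).measure_preimage (SS_meas b).nullMeasurableSet
    rw [SS_preimage, Equiv.swap_apply_right] at h
    exact h
  have hcover : (univ : Set (Fin k → I)) ⊆ (⋃ j, SS k j) ∪ NonInjSet k := by
    intro x _
    by_cases hinj : ∃ i j : Fin k, i ≠ j ∧ x i = x j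
    · exact Or.inr hinj
    · push_neg at hinj
      left
      obtain ⟨j0, hj0⟩ := Finite.exists_max x
      refine mem_iUnion.2 ⟨j0, fun i hi => lt_of_le_of_ne (hj0 i) (hinj i j0 hi)⟩
  have hsum : ∑ j : Fin k, volume (SS k j) = 1 := by
    have h1 : volume (⋃ j, SS k j) = ∑ j : Fin k, volume (SS k j) := by
      rw [measure_iUnion SS_disj SS_meas, tsum_fintype]
    apply le_antisymm
    · rw [← h1]; exact prob_le_one
    · calc (1 : ℝ≥0∞) = volume (univ : Set (Fin k → I)) := measure_univ.symm
        _ ≤ volume ((⋃ j, SS k j) ∪ NonInjSet k) := measure_mono hcover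
        _ ≤ volume (⋃ j, SS k j) + volume (NonInjSet k) := measure_union_le _ _
        _ = ∑ j : Fin k, volume (SS k j) := by rw [noninj_null, add_zero, h1]
  have hk0 : (k : ℝ≥0∞) ≠ 0 := by
    simp [NeZero.ne k]
  have hkt : (k : ℝ≥0∞) ≠ ⊤ := natCast_ne_top k
  have hmul : (k : ℝ≥0∞) * volume (SS k j) = 1 := by
    rw [← hsum, Finset.sum_congr rfl (fun a _ => heq a j)]
    simp [Finset.card_univ, mul_comm]
  exact (ENNReal.eq_div_iff hk0 hkt).2 hmul


end SS

section NatAux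

lemma nat_mod_pred {p j : ℕ} (hp : 0 < p) (h : j % p ≠ 0) : (j - 1) % p = j % p - 1 := by
  have e := Nat.div_add_mod j p
  have hlt := Nat.mod_lt j hp
  have h1 : j - 1 = p * (j / p) + (j % p - 1) := by omega
  rw [h1, Nat.mul_add_mod]
  exact Nat.mod_eq_of_lt (by omega)

lemma nat_last_mod {p m : ℕ} (hp : 0 < p) (hm : 0 < m) : (p * m - 1) % p = p - 1 := by
  have e : p * m = p * (m - 1) + p := by
    conv_lhs => rw [show m = (m - 1) + 1 by omega]
    rw [Nat.mul_add, Nat.mul_one]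
  have h1 : p * m - 1 = p * (m - 1) + (p - 1) := by omega
  rw [h1, Nat.mul_add_mod]
  exact Nat.mod_eq_of_lt (by omega)

end NatAux

section Lower

lemma lower_bound {k p m : ℕ} (hk : 2 ≤ k) (hp : 1 ≤ p) (hm : k = p * m + 1) :
    ∃ g : (Fin (k - 1) → I) → Fin p, Measurable g ∧
      volume {x : Fin k → I |
        g (fun i => x (Fin.castLE (by omega) i)) > g (fun i => x ⟨i.1 + 1, by omega⟩)} =
      (((p - 1) * m : ℕ) : ℝ≥0∞) / k := by
  classical
  haveI : NeZero k := ⟨by omega⟩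
  haveI : NeZero (k - 1) := ⟨by omega⟩
  have hm1 : 1 ≤ m := by
    rcases Nat.eq_zero_or_pos m with h | h
    · subst h; rw [Nat.mul_zero] at hm; omega
    · exact h
  set g : (Fin (k - 1) → I) → Fin p :=
    fun y => ⟨(maxIdx y).1 % p, Nat.mod_lt _ (by omega)⟩ with hgdef
  have hgm : Measurable g :=
    Measurable.comp (measurable_from_top
      (f := fun j : Fin (k - 1) => (⟨j.1 % p, Nat.mod_lt _ (by omega)⟩ : Fin p))) measurable_maxIdx
  refine ⟨g, hgm, ?_⟩
  set B : Set (Fin k → I) := {x : Fin k → I |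
      g (fun i => x (Fin.castLE (by omega) i)) > g (fun i => x ⟨i.1 + 1, by omega⟩)} with hB
  set Good : Finset (Fin k) :=
    Finset.univ.filter (fun j : Fin k => 0 < j.1 ∧ j.1 < k - 1 ∧ ¬ p ∣ j.1) with hGood
  -- membership in B via maxIdx
  have hmem : ∀ x : Fin k → I, x ∈ B ↔
      (maxIdx (fun i : Fin (k - 1) => x ⟨i.1 + 1, by omega⟩)).1 % p <
      (maxIdx (fun i : Fin (k - 1) => x (Fin.castLE (by omega) i))).1 % p :=
    fun x => Iff.rfl
  -- windows' argmax
  have hW1 : ∀ (x : Fin k → I) (j : Fin k) (hj : j.1 < k - 1), x ∈ SS k j →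
      maxIdx (fun i : Fin (k - 1) => x (Fin.castLE (by omega) i)) = ⟨j.1, hj⟩ := by
    intro x j hj hx
    apply maxIdx_eq_of_strict
    intro i hi
    have hne : Fin.castLE (by omega : k - 1 ≤ k) i ≠ j := by
      intro e
      apply hi
      apply Fin.ext
      have := congrArg Fin.val e
      simpa using this
    have hlt := hx _ hne
    have hcj : x j = x (Fin.castLE (by omega : k - 1 ≤ k) (⟨j.1, hj⟩ : Fin (k - 1))) :=
      congrArg x (Fin.ext rfl)
    exact lt_of_lt_of_eq hlt hcj
  have hW2 : ∀ (x : Fin k → I) (j : Fin k) (h1 : 0 < j.1), x ∈ SS k j →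
      maxIdx (fun i : Fin (k - 1) => x ⟨i.1 + 1, by omega⟩) = ⟨j.1 - 1, by omega⟩ := by
    intro x j h1 hx
    apply maxIdx_eq_of_strict
    intro i hi
    have hjk : j.1 < k := j.isLt
    have hne : (⟨i.1 + 1, by omega⟩ : Fin k) ≠ j := by
      intro e
      apply hi
      apply Fin.ext
      have h2 := congrArg Fin.val e
      simp only [] at h2
      show i.1 = j.1 - 1
      omega
    have hlt := hx _ hne
    have hcj : x j =
        x ⟨((⟨j.1 - 1, by omega⟩ : Fin (k - 1))).1 + 1, by omega⟩ := by
      apply congrArg x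
      apply Fin.ext
      simp
      omega
    exact lt_of_lt_of_eq hlt hcj
  -- Good windows are in B
  have hGoodB : ∀ j ∈ Good, SS k j ⊆ B := by
    intro j hj x hx
    simp only [hGood, Finset.mem_filter, Finset.mem_univ, true_and] at hj
    obtain ⟨hj0, hjk, hjp⟩ := hj
    rw [hmem x, hW1 x j hjk hx, hW2 x j hj0 hx]
    show (j.1 - 1) % p < j.1 % p
    have hr : j.1 % p ≠ 0 := fun e => hjp (Nat.dvd_of_mod_eq_zero e)
    rw [nat_mod_pred (by omega) hr]
    omega
  -- B is covered by good windows and ties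
  have hBGood : B ⊆ (⋃ j ∈ Good, SS k j) ∪ NonInjSet k := by
    intro x hxB
    by_cases hinj : x ∈ NonInjSet k
    · exact Or.inr hinj
    · left
      have hninj : ∀ i j : Fin k, i ≠ j → x i ≠ x j := by
        intro i j hij he
        exact hinj ⟨i, j, hij, he⟩
      obtain ⟨j0, hj0⟩ := Finite.exists_max x
      have hxS : x ∈ SS k j0 := fun i hi => lt_of_le_of_ne (hj0 i) (hninj i j0 hi)
      have hxB' := (hmem x).1 hxB
      -- rule out j0.1 = 0
      have hne0 : 0 < j0.1 := by
        by_contra h0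
        have hj00 : j0.1 < k - 1 := by omega
        rw [hW1 x j0 hj00 hxS] at hxB'
        have h' : (maxIdx (fun i : Fin (k - 1) => x ⟨i.1 + 1, by omega⟩)).1 % p
            < j0.1 % p := hxB'
        have hz : j0.1 % p = 0 := by rw [show j0.1 = 0 by omega]; exact Nat.zero_mod p
        omega
      -- rule out j0.1 = k - 1
      have hnek : j0.1 < k - 1 := by
        by_contra hlast
        have hj1 : j0.1 = k - 1 := by have := j0.isLt; omega
        rw [hW2 x j0 (by omega) hxS] at hxB'
        have h' : (j0.1 - 1) % p
            < (maxIdx (fun i : Fin (k - 1) => x (Fin.castLE (by omega) i))).1 % p := hxB'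
        have hz : (j0.1 - 1) % p = p - 1 := by
          rw [show j0.1 - 1 = p * m - 1 by omega]
          exact nat_last_mod (by omega) (by omega)
        have hub := Nat.mod_lt (maxIdx (fun i : Fin (k - 1) =>
          x (Fin.castLE (by omega) i))).1 (show 0 < p by omega)
        omega
      -- rule out p ∣ j0.1
      have hnd : ¬ p ∣ j0.1 := by
        intro hdvd
        rw [hW1 x j0 hnek hxS] at hxB'
        have h' : (maxIdx (fun i : Fin (k - 1) => x ⟨i.1 + 1, by omega⟩)).1 % p
            < j0.1 % p := hxB'
        have hz : j0.1 % p = 0 := Nat.mod_eq_zero_of_dvd hdvd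
        omega
      have hjG : j0 ∈ Good := by
        simp only [hGood, Finset.mem_filter, Finset.mem_univ, true_and]
        exact ⟨hne0, hnek, hnd⟩
      exact mem_biUnion hjG hxS
  -- measure computation
  have hμGood : volume (⋃ j ∈ Good, SS k j) = (Good.card : ℝ≥0∞) / k := by
    rw [measure_biUnion_finset (fun a _ b _ hab => SS_disj hab) (fun j _ => SS_meas j)]
    rw [Finset.sum_congr rfl (fun j _ => SS_vol j), Finset.sum_const, nsmul_eq_mul,
      mul_one_div]
  have hvol : volume B = (Good.card : ℝ≥0∞) / k := by
    apply le_antisymm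
    · calc volume B ≤ volume ((⋃ j ∈ Good, SS k j) ∪ NonInjSet k) := measure_mono hBGood
        _ ≤ volume (⋃ j ∈ Good, SS k j) + volume (NonInjSet k) := measure_union_le _ _
        _ = (Good.card : ℝ≥0∞) / k := by rw [noninj_null, add_zero, hμGood]
    · rw [← hμGood]
      exact measure_mono (iUnion₂_subset hGoodB)
  -- cardinality of Good
  have hcard : Good.card = (p - 1) * m := by
    have h1 : Good.card = ((Finset.Ioc 0 (k - 2)).filter (fun j => ¬ p ∣ j)).card := by
      apply Finset.card_bij (fun (j : Fin k) _ => j.1)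
      · intro a ha
        simp only [hGood, Finset.mem_filter, Finset.mem_univ, true_and] at ha
        simp only [Finset.mem_filter, Finset.mem_Ioc]
        exact ⟨⟨ha.1, by omega⟩, ha.2.2⟩
      · intro a _ b _ hab
        exact Fin.ext hab
      · intro b hb
        simp only [Finset.mem_filter, Finset.mem_Ioc] at hb
        refine ⟨⟨b, by omega⟩, ?_, rfl⟩
        simp only [hGood, Finset.mem_filter, Finset.mem_univ, true_and]
        exact ⟨hb.1.1, by omega, hb.2⟩
    have h2 := Nat.Ioc_filter_dvd_card_eq_div (k - 2) p
    have h3 := Finset.card_filter_add_card_filter_not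
      (s := Finset.Ioc 0 (k - 2)) (p := fun j => p ∣ j)
    have h4 : (Finset.Ioc 0 (k - 2)).card = k - 2 := by rw [Nat.card_Ioc]; omega
    have h5 : (k - 2) / p = m - 1 := by
      have e : p * m = p * (m - 1) + p := by
        conv_lhs => rw [show m = (m - 1) + 1 by omega]
        rw [Nat.mul_add, Nat.mul_one]
      rw [show k - 2 = p * (m - 1) + (p - 1) by omega]
      rw [Nat.mul_add_div (by omega)]
      rw [Nat.div_eq_of_lt (by omega)]
      omega
    have e4 : (p - 1) * m = p * m - m := by rw [Nat.sub_mul, one_mul]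
    omega
  rw [hvol, hcard]
end Lower

section Final

lemma one_sub_inv_nat (n : ℕ) (hn : 1 ≤ n) :
    (1 : ℝ≥0∞) - 1 / n = ((n - 1 : ℕ) : ℝ≥0∞) / n := by
  have hn0 : (n : ℝ≥0∞) ≠ 0 := by
    simp only [ne_eq, Nat.cast_eq_zero]; omega
  have hnt : (n : ℝ≥0∞) ≠ ⊤ := natCast_ne_top n
  have hadd : ((n - 1 : ℕ) : ℝ≥0∞) / n + 1 / n = 1 := by
    rw [ENNReal.div_add_div_same]
    have hc : ((n - 1 : ℕ) : ℝ≥0∞) + 1 = (n : ℝ≥0∞) := by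
      norm_cast
      omega
    rw [hc, ENNReal.div_self hn0 hnt]
  calc (1 : ℝ≥0∞) - 1 / n = (((n - 1 : ℕ) : ℝ≥0∞) / n + 1 / n) - 1 / n := by rw [hadd]
    _ = ((n - 1 : ℕ) : ℝ≥0∞) / n :=
        ENNReal.add_sub_cancel_right (by simp [ENNReal.div_eq_top, hn0])

/-- exact value of λ_{p,k} when p divides k-1. -/
theorem stmt_6 (k p : ℕ) (hk : 2 ≤ k) (hp : 1 ≤ p) (hdvd : p ∣ (k - 1)) :
    (⨆ (g : (Fin (k - 1) → I) → Fin p) (_ : Measurable g),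
        volume {x : Fin k → I |
          g (fun i => x (Fin.castLE (by omega) i)) >
          g (fun i => x ⟨i.1 + 1, by omega⟩)}) =
      (1 - 1 / (p : ℝ≥0∞)) * (1 - 1 / (k : ℝ≥0∞)) := by
  obtain ⟨m, hm'⟩ := hdvd
  have hm : k = p * m + 1 := by omega
  have hp0 : (p : ℝ≥0∞) ≠ 0 := by simp only [ne_eq, Nat.cast_eq_zero]; omega
  have hpt : (p : ℝ≥0∞) ≠ ⊤ := natCast_ne_top p
  have hrhs : (1 - 1 / (p : ℝ≥0∞)) * (1 - 1 / (k : ℝ≥0∞)) =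
      (((p - 1) * m : ℕ) : ℝ≥0∞) / k := by
    rw [one_sub_inv_nat p hp, one_sub_inv_nat k (by omega)]
    rw [show ((k - 1 : ℕ) : ℝ≥0∞) = ((p * m : ℕ) : ℝ≥0∞) by rw [hm']]
    rw [Nat.cast_mul p m, Nat.cast_mul (p - 1) m]
    calc ((p - 1 : ℕ) : ℝ≥0∞) / p * ((p : ℝ≥0∞) * m / k)
        = ((p - 1 : ℕ) : ℝ≥0∞) / p * ((p : ℝ≥0∞) * ((m : ℝ≥0∞) / k)) := by
          rw [mul_div_assoc]
      _ = ((p - 1 : ℕ) : ℝ≥0∞) / p * (p : ℝ≥0∞) * ((m : ℝ≥0∞) / k) := by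
          rw [mul_assoc]
      _ = ((p - 1 : ℕ) : ℝ≥0∞) * ((m : ℝ≥0∞) / k) := by
          rw [ENNReal.div_mul_cancel hp0 hpt]
      _ = ((p - 1 : ℕ) : ℝ≥0∞) * (m : ℝ≥0∞) / k := by rw [mul_div_assoc]
  rw [hrhs]
  apply le_antisymm
  · exact iSup_le fun g => iSup_le fun hg => upper_bound hk hp hm g hg
  · obtain ⟨g, hgm, hgv⟩ := lower_bound hk hp hm
    exact le_iSup_of_le g (le_iSup_of_le hgm (le_of_eq hgv.symm))

end Final
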